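/- arXiv:1709.05666 — 3 statements merged into one kernel-verified Lean document; each statement's English description precedes it below -/
import Mathlib

section
/- The ComplEx model is fully expressive: for every n ≥ 1 and every real matrix X ∈ ℝ^{n×n}, there exist a complex matrix E ∈ ℂ^{n×n} (whose rows e_1, …, e_n are the entity embeddings) and a complex vector w ∈ ℂ^n (the relation embedding) such that for all indices s, o ∈ {1, …, n}, X_{s,o} = Re(⟨w, e_s, conj(e_o)⟩); equivalently, X = Re(E · diag(w) · Eᴴ) where Eᴴ is the conjugate transpose of E. -/
open Finset Complex

theorem complEx_fully_expressive (n : ℕ) (hn : 1 ≤ n)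
    (X : Matrix (Fin n) (Fin n) ℝ) :
    ∃ (E : Matrix (Fin n) (Fin n) ℂ) (w : Fin n → ℂ),
      ∀ s o : Fin n,
        X s o = (∑ j : Fin n, w j * E s j * (starRingEnd ℂ) (E o j)).re := by
  -- B = S + iA with S symmetric part, A antisymmetric part; B is Hermitian
  set B : Matrix (Fin n) (Fin n) ℂ :=
    fun s o => ⟨(X s o + X o s) / 2, (X s o - X o s) / 2⟩ with hB
  have hHerm : B.IsHermitian := by
    ext s o
    simp only [hB, Matrix.conjTranspose_apply, Matrix.of_apply]
    apply Complex.ext <;> simp [Matrix.conjTranspose, Matrix.transpose, Matrix.map_apply] <;> ring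
  set U : Matrix (Fin n) (Fin n) ℂ := (hHerm.eigenvectorUnitary : Matrix (Fin n) (Fin n) ℂ)
  refine ⟨U, fun j => (1 - Complex.I) * (hHerm.eigenvalues j : ℂ), fun s o => ?_⟩
  have hspec := hHerm.spectral_theorem
  have hentry : B s o = ∑ j, (hHerm.eigenvalues j : ℂ) * U s j * (starRingEnd ℂ) (U o j) := by
    conv_lhs => rw [hspec]
    simp [Matrix.mul_apply, Matrix.diagonal, Matrix.conjTranspose_apply]
    refine Finset.sum_congr rfl fun j _ => ?_
    simp only [U, Matrix.IsHermitian.eigenvectorUnitary_apply]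
    ring
  have : ∑ j, ((1 - Complex.I) * (hHerm.eigenvalues j : ℂ)) * U s j * (starRingEnd ℂ) (U o j)
      = (1 - Complex.I) * B s o := by
    rw [hentry, Finset.mul_sum]
    congr 1; ext j; ring
  rw [this]
  have hre : B s o = ⟨(X s o + X o s) / 2, (X s o - X o s) / 2⟩ := rfl
  rw [hre]
  simp [Complex.ext_iff, Complex.sub_re, Complex.mul_re]
  ring
end

section
/- Solutions of the DistMult training system on partially observed blocks need not satisfy the held-out block constraints: there exist vectors w_s, w_g, e_a, e_b, e_c, e_d ∈ ℝ² satisfying all nine inequalities ⟨w_s, e_a, e_a⟩ < 0, ⟨w_s, e_b, e_b⟩ < 0, ⟨w_s, e_a, e_b⟩ > 0, ⟨w_g, e_a, e_a⟩ < 0, ⟨w_g, e_b, e_b⟩ < 0, ⟨w_g, e_a, e_b⟩ < 0, ⟨w_s, e_c, e_c⟩ < 0, ⟨w_s, e_d, e_d⟩ < 0, ⟨w_s, e_c, e_d⟩ > 0, but for which the three further inequalities ⟨w_g, e_c, e_c⟩ < 0, ⟨w_g, e_d, e_d⟩ < 0, ⟨w_g, e_c, e_d⟩ < 0 do not all hold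 (for instance w_s = (−2,1), w_g = (0,−1), e_a = (1,1), e_b = (−1,1), e_c = (1,0), e_d = (−1,1)). -/
open Finset

/-- Trilinear product of three vectors in ℝ². -/
def tri (a b c : Fin 2 → ℝ) : ℝ := ∑ j : Fin 2, a j * b j * c j

theorem distmult_training_solution_fails_heldout_block :
    ∃ ws wg ea eb ec ed : Fin 2 → ℝ,
      (tri ws ea ea < 0 ∧ tri ws eb eb < 0 ∧ 0 < tri ws ea eb ∧
       tri wg ea ea < 0 ∧ tri wg eb eb < 0 ∧ tri wg ea eb < 0 ∧
       tri ws ec ec < 0 ∧ tri ws ed ed < 0 ∧ 0 < tri ws ec ed) ∧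
      ¬ (tri wg ec ec < 0 ∧ tri wg ed ed < 0 ∧ tri wg ec ed < 0) := by
  refine ⟨![-2,1], ![0,-1], ![1,1], ![-1,1], ![1,0], ![-1,1], ?_, ?_⟩ <;>
    simp [tri, Fin.sum_univ_two] <;> norm_num
end

section
/- The holographic embeddings (HolE) score equals a ComplEx-type score in the Fourier domain: for every K ≥ 1 and all real vectors w, a, b ∈ ℝ^K (indexed by k ∈ {0, …, K−1}), wᵀ(a ⋆ b) = (1/K) · Re( Σ_{j=0}^{K−1} F(w)_j · F(a)_j · conj(F(b)_j) ), where ⋆ denotes circular correlation and F the discrete Fourier transform. -/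
open Finset Complex

/-- Discrete Fourier transform of a real vector `x ∈ ℝ^K`:
`F(x)_j = Σ_{k=0}^{K-1} x_k e^{-2πi jk / K}`. -/
noncomputable def dft (K : ℕ) (x : Fin K → ℝ) (j : Fin K) : ℂ :=
  ∑ k : Fin K, (x k : ℂ) * Complex.exp (-(2 * Real.pi * Complex.I * (j : ℕ) * (k : ℕ)) / K)

/-- Circular correlation of two real vectors: `(a ⋆ b)_k = Σ_j a_j b_{(k+j) mod K}`. -/
def ccorr (K : ℕ) (a b : Fin K → ℝ) (k : Fin K) : ℝ :=
  ∑ j : Fin K, a j * b (k + j)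

lemma sum_pow_ite {x : ℂ} {K : ℕ} (hK : 1 ≤ K) (hx : x ^ K = 1) :
    ∑ j : Fin K, x ^ (j : ℕ) = if x = 1 then (K : ℂ) else 0 := by
  rw [Fin.sum_univ_eq_sum_range]
  split_ifs with h
  · simp [h]
  · rw [geom_sum_eq h, hx, sub_self, zero_div]

lemma finCast_inj {K : ℕ} (hK : 1 ≤ K) {x y : Fin K} (h : ((x:ℕ) : ZMod K) = ((y:ℕ) : ZMod K)) : x = y := by
  haveI : NeZero K := ⟨by omega⟩
  have hx := ZMod.val_cast_of_lt x.isLt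
  have hy := ZMod.val_cast_of_lt y.isLt
  exact Fin.ext (by rw [← hx, ← hy, h])

lemma dvd_iff_eq {K : ℕ} (hK : 1 ≤ K) (p q r : Fin K) :
    (K : ℤ) ∣ ((r:ℕ):ℤ) - ((p:ℕ):ℤ) - ((q:ℕ):ℤ) ↔ r = p + q := by
  haveI : NeZero K := ⟨by omega⟩
  rw [← ZMod.intCast_zmod_eq_zero_iff_dvd]
  push_cast
  rw [sub_sub, sub_eq_zero]
  constructor
  · intro h
    refine finCast_inj hK ?_
    rw [Fin.val_add, ZMod.natCast_mod]
    push_cast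
    exact h
  · intro h
    subst h
    rw [Fin.val_add]
    push_cast [ZMod.natCast_mod]
    ring

lemma orth {K : ℕ} (hK : 1 ≤ K) (p q r : Fin K) :
    ∑ j : Fin K,
      Complex.exp (-(2 * Real.pi * Complex.I * (j:ℕ) * (p:ℕ)) / K) *
      Complex.exp (-(2 * Real.pi * Complex.I * (j:ℕ) * (q:ℕ)) / K) *
      (starRingEnd ℂ) (Complex.exp (-(2 * Real.pi * Complex.I * (j:ℕ) * (r:ℕ)) / K)) =
    if r = p + q then (K : ℂ) else 0 := by
  set ζ : ℂ := Complex.exp (2 * Real.pi * Complex.I / K) with hζdef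
  have hζ : IsPrimitiveRoot ζ K := Complex.isPrimitiveRoot_exp K (by omega)
  have hζ0 : ζ ≠ 0 := Complex.exp_ne_zero _
  have hexp : ∀ (j k : Fin K),
      Complex.exp (-(2 * Real.pi * Complex.I * (j:ℕ) * (k:ℕ)) / K)
        = ζ ^ (-(((j:ℕ):ℤ) * ((k:ℕ):ℤ))) := by
    intro j k
    rw [hζdef, ← Complex.exp_int_mul]
    congr 1
    push_cast
    ring
  have hcζ : (starRingEnd ℂ) ζ = ζ⁻¹ := by
    rw [hζdef, ← Complex.exp_conj, ← Complex.exp_neg]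
    congr 1
    simp [map_div₀, Complex.conj_I, map_ofNat]
    ring
  have hterm : ∀ j : Fin K,
      Complex.exp (-(2 * Real.pi * Complex.I * (j:ℕ) * (p:ℕ)) / K) *
      Complex.exp (-(2 * Real.pi * Complex.I * (j:ℕ) * (q:ℕ)) / K) *
      (starRingEnd ℂ) (Complex.exp (-(2 * Real.pi * Complex.I * (j:ℕ) * (r:ℕ)) / K))
        = (ζ ^ (((r:ℕ):ℤ) - ((p:ℕ):ℤ) - ((q:ℕ):ℤ))) ^ (j:ℕ) := by
    intro j
    rw [hexp, hexp, hexp, map_zpow₀, hcζ, inv_zpow', neg_neg, ← zpow_add₀ hζ0, ← zpow_add₀ hζ0]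
    rw [← zpow_natCast (ζ ^ _), ← zpow_mul]
    congr 1
    ring
  rw [Finset.sum_congr rfl (fun j _ => hterm j)]
  have hx : (ζ ^ (((r:ℕ):ℤ) - ((p:ℕ):ℤ) - ((q:ℕ):ℤ))) ^ K = 1 := by
    rw [← zpow_natCast, ← zpow_mul, mul_comm, zpow_mul, zpow_natCast, hζ.pow_eq_one, one_zpow]
  rw [sum_pow_ite hK hx]
  congr 1
  rw [eq_iff_iff, hζ.zpow_eq_one_iff_dvd, dvd_iff_eq hK]
theorem holE_score_eq_complEx_score_in_fourier_domain
    (K : ℕ) (hK : 1 ≤ K) (w a b : Fin K → ℝ) :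
    ∑ k : Fin K, w k * ccorr K a b k =
      (1 / K) *
        (∑ j : Fin K, dft K w j * dft K a j * (starRingEnd ℂ) (dft K b j)).re := by
  have hK0 : (K:ℝ) ≠ 0 := Nat.cast_ne_zero.mpr (by omega)
  have key : ∀ p q : Fin K,
      ∑ r : Fin K, ((w p : ℂ) * a q * b r) * (if r = p + q then (K:ℂ) else 0)
        = (K:ℂ) * ((w p : ℂ) * a q * b (p+q)) := by
    intro p q
    rw [Finset.sum_eq_single (p+q)]
    · rw [if_pos rfl]; ring
    · intro r _ hr; rw [if_neg hr, mul_zero]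
    · simp
  have hS : (∑ j : Fin K, dft K w j * dft K a j * (starRingEnd ℂ) (dft K b j))
      = (K:ℂ) * ∑ p : Fin K, ∑ q : Fin K, ((w p : ℂ) * a q * b (p+q)) := by
    calc
      ∑ j : Fin K, dft K w j * dft K a j * (starRingEnd ℂ) (dft K b j)
          = ∑ j : Fin K, ∑ p : Fin K, ∑ q : Fin K, ∑ r : Fin K,
              ((w p : ℂ) * a q * b r) *
                (Complex.exp (-(2 * Real.pi * Complex.I * (j:ℕ) * (p:ℕ)) / K) *
                 Complex.exp (-(2 * Real.pi * Complex.I * (j:ℕ) * (q:ℕ)) / K) *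
                 (starRingEnd ℂ) (Complex.exp (-(2 * Real.pi * Complex.I * (j:ℕ) * (r:ℕ)) / K))) := by
            unfold dft
            refine Finset.sum_congr rfl fun j _ => ?_
            rw [Finset.sum_mul_sum, map_sum, Finset.sum_mul]
            refine Finset.sum_congr rfl fun p _ => ?_
            rw [Finset.sum_mul]
            refine Finset.sum_congr rfl fun q _ => ?_
            rw [Finset.mul_sum]
            simp only [map_mul, Complex.conj_ofReal]
            refine Finset.sum_congr rfl fun r _ => by ring
      _ = ∑ p : Fin K, ∑ j : Fin K, ∑ q : Fin K, ∑ r : Fin K, _ := Finset.sum_comm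
      _ = ∑ p : Fin K, ∑ q : Fin K, ∑ j : Fin K, ∑ r : Fin K, _ :=
            Finset.sum_congr rfl fun p _ => Finset.sum_comm
      _ = ∑ p : Fin K, ∑ q : Fin K, ∑ r : Fin K, ∑ j : Fin K, _ :=
            Finset.sum_congr rfl fun p _ => Finset.sum_congr rfl fun q _ => Finset.sum_comm
      _ = ∑ p : Fin K, ∑ q : Fin K, ∑ r : Fin K,
              ((w p : ℂ) * a q * b r) * (if r = p + q then (K:ℂ) else 0) := by
            refine Finset.sum_congr rfl fun p _ => Finset.sum_congr rfl fun q _ =>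
              Finset.sum_congr rfl fun r _ => ?_
            rw [← Finset.mul_sum, orth hK p q r]
      _ = (K:ℂ) * ∑ p : Fin K, ∑ q : Fin K, ((w p : ℂ) * a q * b (p+q)) := by
            rw [Finset.mul_sum]
            refine Finset.sum_congr rfl fun p _ => ?_
            rw [Finset.mul_sum]
            exact Finset.sum_congr rfl fun q _ => key p q
  rw [hS]
  have hre : ((K:ℂ) * ∑ p : Fin K, ∑ q : Fin K, ((w p : ℂ) * a q * b (p+q)))
      = (((K:ℝ) * ∑ p : Fin K, ∑ q : Fin K, (w p * a q * b (p+q)) : ℝ) : ℂ) := by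
    push_cast
    ring
  rw [hre, Complex.ofReal_re]
  unfold ccorr
  rw [one_div, inv_mul_eq_div, eq_div_iff hK0]
  simp only [Finset.sum_mul, Finset.mul_sum]
  exact Finset.sum_congr rfl fun p _ => Finset.sum_congr rfl fun q _ => by ring
end
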